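/- Let N > 0 and a ≠ 0 be real. The normalization constants of the multiple Hermite polynomials satisfy: h^{(1)}_{k₁,k₂} = (k₁/N)·h^{(1)}_{k₁−1,k₂} for all k₁ ≥ 1, k₂ ≥ 0; h^{(2)}_{k₁,k₂} = (k₂/N)·h^{(2)}_{k₁,k₂−1} for all k₁ ≥ 0, k₂ ≥ 1; h^{(2)}_{k₁+1,k₂} = −2a·h^{(2)}_{k₁,k₂} for all k₁, k₂ ≥ 0; and h^{(1)}_{k₁,k₂+1} = 2a·h^{(1)}_{k₁,k₂} for all k₁, k₂ ≥ 0. -/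

import Mathlib

open MeasureTheory Filter Topology Polynomial Asymptotics

noncomputable section

/-- first weight -/
def w1 (N a x : ℝ) : ℝ := Real.exp (-N * (x ^ 2 / 2 - a * x))

/-- second weight -/
def w2 (N a x : ℝ) : ℝ := Real.exp (-N * (x ^ 2 / 2 + a * x))

/-- `P` is the multiple Hermite polynomial with indices `k₁, k₂`. -/
def IsMHP (N a : ℝ) (k₁ k₂ : ℕ) (P : Polynomial ℝ) : Prop :=
  P.Monic ∧ P.natDegree = k₁ + k₂ ∧
  (∀ j < k₁, ∫ x : ℝ, P.eval x * x ^ j * w1 N a x = 0) ∧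
  (∀ j < k₂, ∫ x : ℝ, P.eval x * x ^ j * w2 N a x = 0)

/-- the normalization constant `h⁽¹⁾` -/
def hc1 (N a : ℝ) (k₁ : ℕ) (P : Polynomial ℝ) : ℝ :=
  ∫ x : ℝ, P.eval x * x ^ k₁ * w1 N a x

/-- the normalization constant `h⁽²⁾` -/
def hc2 (N a : ℝ) (k₂ : ℕ) (P : Polynomial ℝ) : ℝ :=
  ∫ x : ℝ, P.eval x * x ^ k₂ * w2 N a x

/-! For `b > 0` the Gauss transform `Φ Q (y) = ∫ Q(x + y) e^{-b x²} dx` maps polynomials to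
polynomials, commutes with `d/dy` and, by integration by parts, satisfies
`Φ (X Q) = X Φ Q + (2b)⁻¹ (Φ Q)'`. Completing the square, `∫ Q xʲ w₁ = e^{N a²/2} Φ (Xʲ Q) (a)`
with `b = N/2`. Iterating the commutation rule, `Φ (Xʲ Q) ≡ (2b)^{-j} (Φ Q)^{(j)}` modulo the
ideal generated by `Φ Q, …, (Φ Q)^{(j-1)}`; so, inductively, the orthogonality conditions of
`P = P_{k₁,k₂}` say exactly that the first `k₁` derivatives of `Φ P` vanish at `a`, and (since
`w₂` is `w₁` with `a` replaced by `-a`) that the first `k₂` vanish at `-a`. As `Φ P` has degree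
`k₁ + k₂` and leading coefficient `∫ e^{-b x²}`, it is that constant times
`(X - a)^{k₁} (X + a)^{k₂}`, and then
`h⁽¹⁾_{k₁,k₂} = e^{N a²/2} Φ (X^{k₁} P) (a) = (∫ w₁) k₁! N^{-k₁} (2a)^{k₂}`. Symmetrically
`h⁽²⁾_{k₁,k₂} = (∫ w₂) k₂! N^{-k₂} (-2a)^{k₁}`, and the four recurrences are read off. -/

section CommRing

variable {R : Type*} [CommRing R]

lemma eval_iterate_derivative_X_sub_C_pow_mul (c : R) (m : ℕ) (G : R[X]) :
    (derivative^[m] ((X - C c) ^ m * G)).eval c = m.factorial * G.eval c := by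
  rw [iterate_derivative_mul, eval_finsetSum,
    Finset.sum_eq_single_of_mem 0 (Finset.mem_range.mpr m.succ_pos)]
  · simp [iterate_derivative_X_sub_pow_self]
  · intro i hi hi0
    rw [iterate_derivative_X_sub_pow, eval_smul, eval_mul, eval_smul, eval_pow,
      Nat.sub_sub_self (Finset.mem_range_succ_iff.mp hi), eval_sub, eval_X, eval_C, sub_self,
      zero_pow hi0, smul_zero, zero_mul, smul_zero]

lemma X_sub_C_pow_dvd_iff_eval_iterate_derivative [IsDomain R] [CharZero R] {F : R[X]} {c : R}
    {k : ℕ} : (X - C c) ^ k ∣ F ↔ ∀ i < k, (derivative^[i] F).eval c = 0 := by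
  rcases eq_or_ne F 0 with rfl | hF
  · simp
  cases k with
  | zero => simp
  | succ n =>
    rw [← le_rootMultiplicity_iff hF, Nat.succ_le_iff,
      lt_rootMultiplicity_iff_isRoot_iterate_derivative hF]
    simp [IsRoot]

lemma derivative_hasseDeriv (f : R[X]) (n : ℕ) :
    derivative (hasseDeriv n f) = hasseDeriv n (derivative f) := by
  have h1 := LinearMap.congr_fun (hasseDeriv_comp (R := R) 1 n) f
  have h2 := LinearMap.congr_fun (hasseDeriv_comp (R := R) n 1) f
  simp only [LinearMap.coe_comp, Function.comp_apply, hasseDeriv_one, LinearMap.smul_apply,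
    Nat.choose_one_right, Nat.choose_succ_self_right] at h1 h2
  rw [h1, h2, add_comm]

lemma eq_C_mul_of_monic_dvd {R : Type*} [CommRing R] {p q : R[X]} (hp : p.Monic) (hdvd : p ∣ q)
    (hdeg : q.natDegree ≤ p.natDegree) : q = C (q.coeff p.natDegree) * p := by
  obtain ⟨E, rfl⟩ := hdvd
  rcases eq_or_ne E 0 with rfl | hE
  · simp
  rw [hp.natDegree_mul' hE] at hdeg
  rw [eq_C_of_natDegree_eq_zero (by omega : E.natDegree = 0), coeff_mul_C,
    hp.coeff_natDegree, one_mul, mul_comm]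

def iterDerivIdeal (F : R[X]) (j : ℕ) : Ideal R[X] :=
  Ideal.span ((fun i => derivative^[i] F) '' Set.Iio j)

lemma iterate_derivative_mem_iterDerivIdeal (F : R[X]) {i j : ℕ} (h : i < j) :
    derivative^[i] F ∈ iterDerivIdeal F j :=
  Ideal.subset_span ⟨i, h, rfl⟩

lemma iterDerivIdeal_mono (F : R[X]) {i j : ℕ} (h : i ≤ j) :
    iterDerivIdeal F i ≤ iterDerivIdeal F j :=
  Ideal.span_mono (Set.image_mono (Set.Iio_subset_Iio h))

lemma derivative_mem_iterDerivIdeal_succ {F r : R[X]} {j : ℕ} (hr : r ∈ iterDerivIdeal F j) :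
    derivative r ∈ iterDerivIdeal F (j + 1) := by
  induction hr using Submodule.span_induction with
  | mem q hq =>
    obtain ⟨i, hi, rfl⟩ := hq
    rw [← Function.iterate_succ_apply' derivative]
    exact iterate_derivative_mem_iterDerivIdeal F (Nat.succ_lt_succ hi)
  | zero => simp
  | add q r _ _ hq hr => rw [map_add]; exact add_mem hq hr
  | smul p q hq' hq =>
    rw [smul_eq_mul, derivative_mul]
    exact add_mem (Ideal.mul_mem_left _ _ (iterDerivIdeal_mono F j.le_succ hq'))
      (Ideal.mul_mem_left _ _ hq)

lemma eval_eq_zero_of_mem_iterDerivIdeal {F r : R[X]} {c : R} {j : ℕ}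
    (h : ∀ i < j, (derivative^[i] F).eval c = 0) (hr : r ∈ iterDerivIdeal F j) :
    r.eval c = 0 := by
  have hle : iterDerivIdeal F j ≤ RingHom.ker (evalRingHom c) :=
    Ideal.span_le.mpr (by rintro _ ⟨i, hi, rfl⟩; exact RingHom.mem_ker.mpr (h i hi))
  exact RingHom.mem_ker.mp (hle hr)

end CommRing

section GaussTransform

variable {b : ℝ}

def gaussMoment (b : ℝ) (n : ℕ) : ℝ := ∫ x : ℝ, x ^ n * Real.exp (-b * x ^ 2)

/-- By Taylor's formula, this is the polynomial `y ↦ ∫ Q(x + y) e^{-b x²} dx`. -/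
def gaussTransform (b : ℝ) (Q : ℝ[X]) : ℝ[X] :=
  ∑ n ∈ Finset.range (Q.natDegree + 1), C (gaussMoment b n) * hasseDeriv n Q

lemma integrable_pow_mul_exp_neg_mul_sq (hb : 0 < b) (n : ℕ) :
    Integrable fun x : ℝ => x ^ n * Real.exp (-b * x ^ 2) := by
  simpa [Real.rpow_natCast] using
    integrable_rpow_mul_exp_neg_mul_sq hb (neg_one_lt_zero.trans_le n.cast_nonneg)

lemma eval_mul_exp_neg_mul_sq_eq_sum (Q : ℝ[X]) {d : ℕ} (hd : Q.natDegree < d) (x : ℝ) :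
    Q.eval x * Real.exp (-b * x ^ 2)
      = ∑ i ∈ Finset.range d, Q.coeff i * (x ^ i * Real.exp (-b * x ^ 2)) := by
  rw [eval_eq_sum_range' hd, Finset.sum_mul]
  simp only [mul_assoc]

lemma integrable_eval_mul_exp_neg_mul_sq (hb : 0 < b) (Q : ℝ[X]) :
    Integrable fun x : ℝ => Q.eval x * Real.exp (-b * x ^ 2) := by
  simp_rw [eval_mul_exp_neg_mul_sq_eq_sum Q (Nat.lt_succ_self _)]
  exact integrable_finsetSum _ fun i _ => (integrable_pow_mul_exp_neg_mul_sq hb i).const_mul _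

lemma integral_eval_mul_exp_neg_mul_sq (hb : 0 < b) (Q : ℝ[X]) {d : ℕ} (hd : Q.natDegree < d) :
    ∫ x : ℝ, Q.eval x * Real.exp (-b * x ^ 2)
      = ∑ n ∈ Finset.range d, Q.coeff n * gaussMoment b n := by
  simp_rw [eval_mul_exp_neg_mul_sq_eq_sum Q hd]
  rw [integral_finsetSum _ fun i _ => (integrable_pow_mul_exp_neg_mul_sq hb i).const_mul _]
  simp only [integral_const_mul, gaussMoment]

lemma integral_eval_X_mul_mul_exp_neg_mul_sq (hb : 0 < b) (S : ℝ[X]) :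
    ∫ x : ℝ, (X * S).eval x * Real.exp (-b * x ^ 2)
      = (2 * b)⁻¹ * ∫ x : ℝ, (derivative S).eval x * Real.exp (-b * x ^ 2) := by
  have hderiv : ∀ x : ℝ, HasDerivAt (fun x => S.eval x * Real.exp (-b * x ^ 2))
      ((derivative S).eval x * Real.exp (-b * x ^ 2)
        - 2 * b * ((X * S).eval x * Real.exp (-b * x ^ 2))) x := by
    intro x
    have hexp : HasDerivAt (fun x : ℝ => Real.exp (-b * x ^ 2))
        (Real.exp (-b * x ^ 2) * (-b * (2 * x))) x := by
      simpa using ((hasDerivAt_pow 2 x).const_mul (-b)).exp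
    have hprod : HasDerivAt (fun x => S.eval x * Real.exp (-b * x ^ 2)) _ x :=
      (S.hasDerivAt x).mul hexp
    convert hprod using 1
    simp only [eval_mul, eval_X]
    ring
  have h := integral_eq_zero_of_hasDerivAt_of_integrable hderiv
    ((integrable_eval_mul_exp_neg_mul_sq hb _).sub
      ((integrable_eval_mul_exp_neg_mul_sq hb (X * S)).const_mul _))
    (integrable_eval_mul_exp_neg_mul_sq hb S)
  rw [integral_sub (integrable_eval_mul_exp_neg_mul_sq hb _)
    ((integrable_eval_mul_exp_neg_mul_sq hb _).const_mul _), integral_const_mul, sub_eq_zero] at h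
  rw [h]
  field_simp

lemma gaussTransform_eq_sum (Q : ℝ[X]) {d : ℕ} (hd : Q.natDegree < d) :
    gaussTransform b Q = ∑ n ∈ Finset.range d, C (gaussMoment b n) * hasseDeriv n Q := by
  refine Finset.sum_subset (Finset.range_subset_range.2 hd) fun n _ hn => ?_
  rw [hasseDeriv_eq_zero_of_lt_natDegree _ _ (by simpa using hn), mul_zero]

lemma eval_gaussTransform (hb : 0 < b) (Q : ℝ[X]) (y : ℝ) :
    (gaussTransform b Q).eval y = ∫ x : ℝ, Q.eval (x + y) * Real.exp (-b * x ^ 2) := by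
  simp_rw [← taylor_eval]
  rw [integral_eval_mul_exp_neg_mul_sq hb _ (d := Q.natDegree + 1)
    (by rw [natDegree_taylor]; omega)]
  simp only [gaussTransform, eval_finsetSum, eval_mul, eval_C, taylor_coeff, mul_comm]

lemma natDegree_gaussTransform_le (Q : ℝ[X]) : (gaussTransform b Q).natDegree ≤ Q.natDegree :=
  natDegree_sum_le_of_forall_le _ _ fun n _ =>
    (natDegree_C_mul_le _ _).trans ((natDegree_hasseDeriv_le Q n).trans (Nat.sub_le _ _))

lemma coeff_gaussTransform_natDegree (Q : ℝ[X]) :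
    (gaussTransform b Q).coeff Q.natDegree = gaussMoment b 0 * Q.leadingCoeff := by
  rw [gaussTransform, finsetSum_coeff, Finset.sum_eq_single 0]
  · rw [hasseDeriv_zero', coeff_C_mul, leadingCoeff]
  · intro n _ hn
    rw [coeff_C_mul, hasseDeriv_coeff, coeff_eq_zero_of_natDegree_lt (by omega), mul_zero,
      mul_zero]
  · simp

lemma derivative_gaussTransform (Q : ℝ[X]) :
    derivative (gaussTransform b Q) = gaussTransform b (derivative Q) := by
  rw [gaussTransform, gaussTransform_eq_sum (derivative Q) (d := Q.natDegree + 1)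
    (Nat.lt_succ_of_le ((natDegree_derivative_le Q).trans (Nat.sub_le _ _))), map_sum]
  simp only [derivative_C_mul, derivative_hasseDeriv]

lemma gaussTransform_X_mul (hb : 0 < b) (Q : ℝ[X]) :
    gaussTransform b (X * Q)
      = X * gaussTransform b Q + C (2 * b)⁻¹ * derivative (gaussTransform b Q) := by
  refine Polynomial.funext fun y => ?_
  have hsplit : ∀ x : ℝ, (X * Q).eval (x + y) * Real.exp (-b * x ^ 2)
      = (X * taylor y Q).eval x * Real.exp (-b * x ^ 2)
        + y * ((taylor y Q).eval x * Real.exp (-b * x ^ 2)) := by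
    intro x
    simp only [eval_mul, eval_X, taylor_eval]
    ring
  have hderiv : derivative (taylor y Q) = taylor y (derivative Q) := by
    simp [taylor_apply, derivative_comp]
  rw [eval_gaussTransform hb]
  simp_rw [hsplit]
  rw [integral_add (integrable_eval_mul_exp_neg_mul_sq hb _)
      ((integrable_eval_mul_exp_neg_mul_sq hb _).const_mul y),
    integral_const_mul, integral_eval_X_mul_mul_exp_neg_mul_sq hb, hderiv]
  simp only [taylor_eval, ← eval_gaussTransform hb, derivative_gaussTransform, eval_add,
    eval_mul, eval_X, eval_C]
  ring

lemma gaussTransform_X_pow_mul_sub_mem (hb : 0 < b) (Q : ℝ[X]) (j : ℕ) :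
    gaussTransform b (X ^ j * Q) - C ((2 * b)⁻¹ ^ j) * derivative^[j] (gaussTransform b Q)
      ∈ iterDerivIdeal (gaussTransform b Q) j := by
  induction j with
  | zero => simp
  | succ j ih =>
    set F := gaussTransform b Q
    set r := gaussTransform b (X ^ j * Q) - C ((2 * b)⁻¹ ^ j) * derivative^[j] F with hr
    have key : gaussTransform b (X ^ (j + 1) * Q) - C ((2 * b)⁻¹ ^ (j + 1)) * derivative^[j + 1] F
        = X * r + C (2 * b)⁻¹ * derivative r + X * C ((2 * b)⁻¹ ^ j) * derivative^[j] F := by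
      rw [show X ^ (j + 1) * Q = X * (X ^ j * Q) by ring, gaussTransform_X_mul hb, hr,
        Function.iterate_succ_apply', derivative_sub, derivative_C_mul, pow_succ', C_mul]
      ring
    rw [key]
    refine add_mem (add_mem ?_ ?_) ?_
    · exact Ideal.mul_mem_left _ _ (iterDerivIdeal_mono F j.le_succ ih)
    · exact Ideal.mul_mem_left _ _ (derivative_mem_iterDerivIdeal_succ ih)
    · exact Ideal.mul_mem_left _ _ (iterate_derivative_mem_iterDerivIdeal F j.lt_succ_self)

lemma eval_gaussTransform_X_pow_mul (hb : 0 < b) (Q : ℝ[X]) {c : ℝ} {j : ℕ}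
    (h : ∀ i < j, (derivative^[i] (gaussTransform b Q)).eval c = 0) :
    (gaussTransform b (X ^ j * Q)).eval c
      = (2 * b)⁻¹ ^ j * (derivative^[j] (gaussTransform b Q)).eval c := by
  have := eval_eq_zero_of_mem_iterDerivIdeal h (gaussTransform_X_pow_mul_sub_mem hb Q j)
  rwa [eval_sub, eval_mul, eval_C, sub_eq_zero] at this

lemma X_sub_C_pow_dvd_gaussTransform (hb : 0 < b) {Q : ℝ[X]} {c : ℝ} {k : ℕ}
    (h : ∀ j < k, (gaussTransform b (X ^ j * Q)).eval c = 0) :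
    (X - C c) ^ k ∣ gaussTransform b Q := by
  rw [X_sub_C_pow_dvd_iff_eval_iterate_derivative]
  intro i
  induction i using Nat.strong_induction_on with
  | _ i ih =>
    intro hi
    have heval := eval_gaussTransform_X_pow_mul hb Q fun m hm => ih m hm (hm.trans hi)
    rw [h i hi] at heval
    exact (mul_eq_zero.mp heval.symm).resolve_left (by positivity)

end GaussTransform

section MultipleHermite

variable {N c : ℝ} {k₁ k₂ : ℕ} {Q : ℝ[X]}

lemma w2_eq_w1_neg (x : ℝ) : w2 N c x = w1 N (-c) x := by
  rw [w1, w2]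
  ring_nf

lemma integral_eval_mul_w1 (hN : 0 < N) (R : ℝ[X]) :
    ∫ x : ℝ, R.eval x * w1 N c x
      = Real.exp (N * c ^ 2 / 2) * (gaussTransform (N / 2) R).eval c := by
  have hsq : ∀ x : ℝ, R.eval x * w1 N c x
      = Real.exp (N * c ^ 2 / 2)
        * (R.eval ((x - c) + c) * Real.exp (-(N / 2) * (x - c) ^ 2)) := by
    intro x
    rw [sub_add_cancel, w1, mul_left_comm, ← Real.exp_add]
    ring_nf
  simp_rw [hsq]
  rw [integral_const_mul, eval_gaussTransform (by positivity),
    integral_sub_right_eq_self (fun u => R.eval (u + c) * Real.exp (-(N / 2) * u ^ 2)) c]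

lemma integral_eval_mul_pow_mul_w1 (hN : 0 < N) (j : ℕ) :
    ∫ x : ℝ, Q.eval x * x ^ j * w1 N c x
      = Real.exp (N * c ^ 2 / 2) * (gaussTransform (N / 2) (X ^ j * Q)).eval c := by
  rw [← integral_eval_mul_w1 hN]
  simp only [eval_mul, eval_pow, eval_X, mul_comm (Q.eval _)]

lemma IsMHP.neg_swap (hQ : IsMHP N c k₁ k₂ Q) : IsMHP N (-c) k₂ k₁ Q := by
  obtain ⟨hmonic, hdeg, h₁, h₂⟩ := hQ
  refine ⟨hmonic, by omega, fun j hj => ?_, fun j hj => ?_⟩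
  · simpa only [← w2_eq_w1_neg] using h₂ j hj
  · simpa only [w2_eq_w1_neg, neg_neg] using h₁ j hj

lemma IsMHP.X_sub_C_pow_dvd (hN : 0 < N) (hQ : IsMHP N c k₁ k₂ Q) :
    (X - C c) ^ k₁ ∣ gaussTransform (N / 2) Q :=
  X_sub_C_pow_dvd_gaussTransform (by positivity) fun j hj => by
    have h := hQ.2.2.1 j hj
    rw [integral_eval_mul_pow_mul_w1 hN] at h
    exact (mul_eq_zero.mp h).resolve_left (Real.exp_ne_zero _)

lemma IsMHP.gaussTransform_eq (hN : 0 < N) (hc : c ≠ 0) (hQ : IsMHP N c k₁ k₂ Q) :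
    gaussTransform (N / 2) Q
      = C (gaussMoment (N / 2) 0) * ((X - C c) ^ k₁ * (X + C c) ^ k₂) := by
  have hmonic : ((X - C c) ^ k₁ * (X + C c) ^ k₂).Monic :=
    ((monic_X_sub_C c).pow k₁).mul ((monic_X_add_C c).pow k₂)
  have hdeg : ((X - C c) ^ k₁ * (X + C c) ^ k₂).natDegree = k₁ + k₂ := by
    rw [((monic_X_sub_C c).pow k₁).natDegree_mul ((monic_X_add_C c).pow k₂), natDegree_pow,
      natDegree_pow, natDegree_X_sub_C, natDegree_X_add_C, mul_one, mul_one]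
  have hcop : IsCoprime (X - C c) (X + C c) := by
    simpa using isCoprime_X_sub_C_of_isUnit_sub (R := ℝ) (a := c) (b := -c)
      (isUnit_iff_ne_zero.mpr (by contrapose! hc; linarith))
  have hdvd₂ : (X + C c) ^ k₂ ∣ gaussTransform (N / 2) Q := by
    simpa using hQ.neg_swap.X_sub_C_pow_dvd hN
  have hdvd := hcop.pow.mul_dvd (hQ.X_sub_C_pow_dvd hN) hdvd₂
  rw [eq_C_mul_of_monic_dvd hmonic hdvd (hdeg ▸ hQ.2.1 ▸ natDegree_gaussTransform_le Q), hdeg,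
    ← hQ.2.1, coeff_gaussTransform_natDegree, hQ.1.leadingCoeff, mul_one]

lemma IsMHP.hc1_eq (hN : 0 < N) (hc : c ≠ 0) (hQ : IsMHP N c k₁ k₂ Q) :
    hc1 N c k₁ Q = Real.exp (N * c ^ 2 / 2) * gaussMoment (N / 2) 0 * N⁻¹ ^ k₁
      * k₁.factorial * (2 * c) ^ k₂ := by
  have hvanish : ∀ i < k₁, (derivative^[i] (gaussTransform (N / 2) Q)).eval c = 0 :=
    X_sub_C_pow_dvd_iff_eval_iterate_derivative.mp (hQ.X_sub_C_pow_dvd hN)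
  rw [hc1, integral_eval_mul_pow_mul_w1 hN, eval_gaussTransform_X_pow_mul (by positivity) Q hvanish,
    hQ.gaussTransform_eq hN hc, mul_left_comm (C _), eval_iterate_derivative_X_sub_C_pow_mul]
  simp only [eval_mul, eval_C, eval_pow, eval_add, eval_X]
  rw [show 2 * (N / 2) = N by ring]
  ring

lemma IsMHP.hc2_eq (hN : 0 < N) (hc : c ≠ 0) (hQ : IsMHP N c k₁ k₂ Q) :
    hc2 N c k₂ Q = Real.exp (N * c ^ 2 / 2) * gaussMoment (N / 2) 0 * N⁻¹ ^ k₂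
      * k₂.factorial * (-2 * c) ^ k₁ := by
  have hswap : hc2 N c k₂ Q = hc1 N (-c) k₂ Q := by simp only [hc1, hc2, w2_eq_w1_neg]
  rw [hswap, hQ.neg_swap.hc1_eq hN (neg_ne_zero.mpr hc), neg_sq]
  ring

end MultipleHermite

/-- Recurrences for the normalization constants of the
multiple Hermite polynomials. -/
theorem statement17 (N a : ℝ) (hN : 0 < N) (ha : a ≠ 0)
    (P : ℕ → ℕ → Polynomial ℝ) (hP : ∀ k₁ k₂ : ℕ, IsMHP N a k₁ k₂ (P k₁ k₂)) :
    (∀ k₁ k₂ : ℕ, 1 ≤ k₁ →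
      hc1 N a k₁ (P k₁ k₂) = (k₁ : ℝ) / N * hc1 N a (k₁ - 1) (P (k₁ - 1) k₂)) ∧
    (∀ k₁ k₂ : ℕ, 1 ≤ k₂ →
      hc2 N a k₂ (P k₁ k₂) = (k₂ : ℝ) / N * hc2 N a (k₂ - 1) (P k₁ (k₂ - 1))) ∧
    (∀ k₁ k₂ : ℕ, hc2 N a k₂ (P (k₁ + 1) k₂) = -2 * a * hc2 N a k₂ (P k₁ k₂)) ∧
    (∀ k₁ k₂ : ℕ, hc1 N a k₁ (P k₁ (k₂ + 1)) = 2 * a * hc1 N a k₁ (P k₁ k₂)) := by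
  have h₁ k₁ k₂ := (hP k₁ k₂).hc1_eq hN ha
  have h₂ k₁ k₂ := (hP k₁ k₂).hc2_eq hN ha
  refine ⟨fun k₁ k₂ hk => ?_, fun k₁ k₂ hk => ?_, fun k₁ k₂ => ?_, fun k₁ k₂ => ?_⟩
  · obtain ⟨m, rfl⟩ := Nat.exists_eq_add_of_le' hk
    rw [h₁, h₁, Nat.add_sub_cancel, Nat.factorial_succ]
    push_cast
    ring
  · obtain ⟨m, rfl⟩ := Nat.exists_eq_add_of_le' hk
    rw [h₂, h₂, Nat.add_sub_cancel, Nat.factorial_succ]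
    push_cast
    ring
  · rw [h₂, h₂]
    ring
  · rw [h₁, h₁]
    ring

end
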